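/- arXiv:1112.5530 — 4 statements merged into one kernel-verified Lean document; each statement's English description precedes it below -/
import Mathlib

section
/- Let G be a finite group and H a subgroup. If S and T are right transversals of H in G (each containing the identity) that are isomorphic as right loops under the induced binary operations, then the sets S^{-1} and T^{-1} of inverses are left transversals of H in G that are isomorphic as left loops under the induced binary operations. Consequently, the number of isomorphism classes of left transversals equals the number of isomorphism classes of right transversals. -/
/-- A left transversal (with identity) of `H` in `G`: a set of representatives,
one from each left coset of `H`, containing `1`. -/
def IsLeftTransversal {G : Type*} [Group G] (H : Subgroup G) (S : Set G) : Prop :=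
  (1 : G) ∈ S ∧ ∀ g : G, ∃! s, s ∈ S ∧ s⁻¹ * g ∈ H

/-- A right transversal (with identity) of `H` in `G`. -/
def IsRightTransversal {G : Type*} [Group G] (H : Subgroup G) (S : Set G) : Prop :=
  (1 : G) ∈ S ∧ ∀ g : G, ∃! s, s ∈ S ∧ g * s⁻¹ ∈ H

/-- `σ` is an isomorphism of the induced left loop structures on left transversals
`T`, `L` of `H`: a bijection such that whenever `z = x ∘ y` in `T`
(i.e. `z ∈ T ∩ xyH`), also `σ z = σ x ∘ σ y` in `L`. -/
def IsLeftIso {G : Type*} [Group G] (H : Subgroup G) (T L : Set G) (σ : G → G) : Prop :=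
  Set.BijOn σ T L ∧ ∀ x ∈ T, ∀ y ∈ T, ∀ z ∈ T,
    z⁻¹ * (x * y) ∈ H → (σ z)⁻¹ * (σ x * σ y) ∈ H

/-- `σ` is an isomorphism of the induced right loop structures on right transversals. -/
def IsRightIso {G : Type*} [Group G] (H : Subgroup G) (T L : Set G) (σ : G → G) : Prop :=
  Set.BijOn σ T L ∧ ∀ x ∈ T, ∀ y ∈ T, ∀ z ∈ T,
    (x * y) * z⁻¹ ∈ H → (σ x * σ y) * (σ z)⁻¹ ∈ H


/-! Inversion `g ↦ g⁻¹` is an anti-automorphism of `G` sending the right coset `Hg` to the left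
coset `g⁻¹H`, so it turns right transversals into left transversals. Since it reverses products,
it also turns an isomorphism `σ` of right loops into the isomorphism `z ↦ (σ z⁻¹)⁻¹` of the
inverted left loops: the loop conditions match after swapping the two factors. Being an
involution, inversion then induces a bijection between the isomorphism classes. -/

section

variable {G : Type*} [Group G] {H : Subgroup G} {S T : Set G}

theorem isLeftTransversal_inv_iff : IsLeftTransversal H S⁻¹ ↔ IsRightTransversal H S := by
  refine and_congr (by simp) ((Equiv.inv G).forall_congr fun {g} => ?_)
  refine (Equiv.inv G).existsUnique_congr fun {s} => ?_
  rw [← inv_mem_iff (x := _ * g), mul_inv_rev]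
  simp

theorem isRightTransversal_inv_iff : IsRightTransversal H S⁻¹ ↔ IsLeftTransversal H S := by
  simpa using (isLeftTransversal_inv_iff (S := S⁻¹)).symm

variable (H) in
def leftTransversalsEquivRightTransversals :
    {S : Set G // IsLeftTransversal H S} ≃ {S : Set G // IsRightTransversal H S} :=
  (Equiv.inv (Set G)).subtypeEquiv fun _ => isRightTransversal_inv_iff.symm

def invConj (σ : G → G) : G → G := fun z => (σ z⁻¹)⁻¹

@[simp]
theorem invConj_apply (σ : G → G) (z : G) : invConj σ z = (σ z⁻¹)⁻¹ := rfl

@[simp]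
theorem invConj_invConj (σ : G → G) : invConj (invConj σ) = σ := by
  funext z
  simp

theorem bijOn_invConj_iff {σ : G → G} : Set.BijOn (invConj σ) S⁻¹ T⁻¹ ↔ Set.BijOn σ S T := by
  simp [Set.BijOn, Set.MapsTo, Set.InjOn, Set.SurjOn, Set.subset_def, Set.forall_inv_mem]

theorem isLeftIso_inv_iff {σ : G → G} :
    IsLeftIso H S⁻¹ T⁻¹ (invConj σ) ↔ IsRightIso H S T σ := by
  have reverse (a b c : G) : a * (b⁻¹ * c⁻¹) ∈ H ↔ c * b * a⁻¹ ∈ H := by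
    rw [← inv_mem_iff]
    simp [mul_assoc]
  refine and_congr bijOn_invConj_iff ?_
  simp only [Set.mem_inv, Set.forall_inv_mem, invConj_apply, inv_inv, reverse]
  exact ⟨fun h x hx y hy => h y hy x hx, fun h x hx y hy => h y hy x hx⟩

theorem isRightIso_inv_iff {σ : G → G} :
    IsRightIso H S⁻¹ T⁻¹ (invConj σ) ↔ IsLeftIso H S T σ := by
  simpa using (isLeftIso_inv_iff (S := S⁻¹) (T := T⁻¹) (σ := invConj σ)).symm

theorem exists_isLeftIso_iff_exists_isRightIso_inv :
    (∃ σ, IsLeftIso H S T σ) ↔ ∃ σ, IsRightIso H S⁻¹ T⁻¹ σ :=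
  ⟨fun ⟨σ, h⟩ => ⟨invConj σ, isRightIso_inv_iff.2 h⟩,
    fun ⟨σ, h⟩ => ⟨invConj σ, isRightIso_inv_iff.1 (by rwa [invConj_invConj])⟩⟩

end

theorem isomorphic_right_transversals_give_isomorphic_left_transversals_general
    {G : Type*} [Group G] (H : Subgroup G) :
    (∀ (S T : Set G) (σ : G → G), IsRightTransversal H S → IsRightTransversal H T →
      IsRightIso H S T σ →
      IsLeftTransversal H S⁻¹ ∧ IsLeftTransversal H T⁻¹ ∧
        ∃ φ : G → G, (∀ x ∈ S, φ x⁻¹ = (σ x)⁻¹) ∧ IsLeftIso H S⁻¹ T⁻¹ φ) ∧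
    Nat.card (Quot fun (T L : {S : Set G // IsLeftTransversal H S}) =>
        ∃ σ : G → G, IsLeftIso H T.1 L.1 σ) =
      Nat.card (Quot fun (T L : {S : Set G // IsRightTransversal H S}) =>
        ∃ σ : G → G, IsRightIso H T.1 L.1 σ) := by
  refine ⟨fun S T σ hS hT hσ => ⟨isLeftTransversal_inv_iff.2 hS, isLeftTransversal_inv_iff.2 hT,
    invConj σ, fun x _ => by simp, isLeftIso_inv_iff.2 hσ⟩, ?_⟩
  exact Nat.card_congr <| Quot.congr (leftTransversalsEquivRightTransversals H) fun _ _ =>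
    exists_isLeftIso_iff_exists_isRightIso_inv

theorem isomorphic_right_transversals_give_isomorphic_left_transversals
    {G : Type*} [Group G] [Finite G] (H : Subgroup G) :
    (∀ (S T : Set G) (σ : G → G), IsRightTransversal H S → IsRightTransversal H T →
      IsRightIso H S T σ →
      IsLeftTransversal H S⁻¹ ∧ IsLeftTransversal H T⁻¹ ∧
        ∃ φ : G → G, (∀ x ∈ S, φ x⁻¹ = (σ x)⁻¹) ∧ IsLeftIso H S⁻¹ T⁻¹ φ) ∧
    Nat.card (Quot fun (T L : {S : Set G // IsLeftTransversal H S}) =>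
        ∃ σ : G → G, IsLeftIso H T.1 L.1 σ) =
      Nat.card (Quot fun (T L : {S : Set G // IsRightTransversal H S}) =>
        ∃ σ : G → G, IsRightIso H T.1 L.1 σ) :=
  isomorphic_right_transversals_give_isomorphic_left_transversals_general H
end

section
/- Let G be a transitive subgroup of Sym(n), H = Stab_G(1), with H core-free in G. Then the group Aut_H(G) of automorphisms of G mapping H onto H is isomorphic to N_{Sym(n-1)}(G) / C_{Sym(n-1)}(G), where Sym(n-1) is the stabilizer of 1 in Sym(n). -/
/-!
Conjugation by an element of `N_{Sym(n-1)}(G)` is an automorphism of `G` fixing `H`, and it is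
trivial exactly on the centralizer. Conversely, if `f ∈ Aut(G)` maps `H = Stab_G(a)` onto itself,
then `g • a ↦ f g • a` is a well-defined permutation `σ` (by transitivity every point is some
`g • a`, and `g • a = h • a` iff `h⁻¹ g ∈ H`); it fixes `a` and satisfies `σ g σ⁻¹ = f g`.
-/

open Pointwise Equiv MulAction Subgroup

section Conjugation

variable {P : Type*} [Group P] {G : Subgroup P}

theorem mem_normalizer_of_conj_eq_mulAut {σ : P} (f : MulAut G)
    (hσ : ∀ g : G, σ * g * σ⁻¹ = f g) : σ ∈ normalizer (G : Set P) := by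
  refine mem_normalizer_iff.mpr fun h => ⟨fun hh => hσ ⟨h, hh⟩ ▸ (f ⟨h, hh⟩).2, fun hh => ?_⟩
  have : σ * (f⁻¹ ⟨_, hh⟩ : P) * σ⁻¹ = σ * h * σ⁻¹ := by rw [hσ, MulAut.apply_inv_self]
  exact mul_left_cancel (mul_right_cancel this) ▸ (f⁻¹ ⟨_, hh⟩).2

end Conjugation

section PointStabilizer

variable {α : Type*} {G : Subgroup (Perm α)} {a : α}

theorem mem_inf_stabilizer_subgroupOf_iff {g : G} :
    g ∈ (G ⊓ stabilizer (Perm α) a).subgroupOf G ↔ (g : Perm α) a = a := by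
  simp [mem_subgroupOf, Perm.smul_def]

theorem mulAut_apply_fixes_of_smul_eq {f : MulAut G}
    (hf : f • (G ⊓ stabilizer (Perm α) a).subgroupOf G = (G ⊓ stabilizer (Perm α) a).subgroupOf G)
    {g : G} (hg : (g : Perm α) a = a) : (f g : Perm α) a = a := by
  rw [← mem_inf_stabilizer_subgroupOf_iff, ← hf]
  exact smul_mem_pointwise_smul _ _ _ (mem_inf_stabilizer_subgroupOf_iff.mpr hg)

theorem mulAut_apply_apply_eq_of_apply_eq {f : MulAut G}
    (hf : f • (G ⊓ stabilizer (Perm α) a).subgroupOf G = (G ⊓ stabilizer (Perm α) a).subgroupOf G)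
    {g h : G} (hgh : (g : Perm α) a = (h : Perm α) a) : (f g : Perm α) a = (f h : Perm α) a := by
  have hfix : ((h⁻¹ * g : G) : Perm α) a = a := by simp [hgh]
  have := mulAut_apply_fixes_of_smul_eq hf hfix
  rwa [map_mul, map_inv, coe_mul, coe_inv, Perm.mul_apply, Perm.inv_eq_iff_eq] at this

theorem exists_perm_fixing_conj_eq_mulAut (htrans : ∀ b, ∃ g ∈ G, g a = b) {f : MulAut G}
    (hf : f • (G ⊓ stabilizer (Perm α) a).subgroupOf G = (G ⊓ stabilizer (Perm α) a).subgroupOf G) :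
    ∃ σ : Perm α, σ a = a ∧ ∀ g : G, σ * g * σ⁻¹ = f g := by
  choose s hsG hs using htrans
  set t : α → G := fun b => ⟨s b, hsG b⟩
  have ht (b : α) : (t b : Perm α) a = b := hs b
  have hf' : f⁻¹ • (G ⊓ stabilizer (Perm α) a).subgroupOf G = (G ⊓ stabilizer (Perm α) a).subgroupOf G :=
    inv_smul_eq_iff.mpr hf.symm
  let σ : Perm α :=
    { toFun b := (f (t b) : Perm α) a
      invFun b := (f⁻¹ (t b) : Perm α) a
      left_inv b := by
        simpa [ht] using mulAut_apply_apply_eq_of_apply_eq hf' (ht ((f (t b) : Perm α) a))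
      right_inv b := by
        simpa [ht] using mulAut_apply_apply_eq_of_apply_eq hf (ht ((f⁻¹ (t b) : Perm α) a)) }
  refine ⟨σ, ?_, fun g => ?_⟩
  · exact (mulAut_apply_apply_eq_of_apply_eq hf (g := t a) (h := 1) (by simp [ht])).trans (by simp)
  · rw [mul_inv_eq_iff_eq_mul]
    ext b
    have := mulAut_apply_apply_eq_of_apply_eq hf (g := t ((g : Perm α) b)) (h := g * t b) (by simp [ht])
    simpa [σ] using this

theorem normalizerMonoidHom_smul_inf_stabilizer {x : normalizer (G : Set (Perm α))}
    (hx : (x : Perm α) a = a) :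
    G.normalizerMonoidHom x • (G ⊓ stabilizer (Perm α) a).subgroupOf G =
      (G ⊓ stabilizer (Perm α) a).subgroupOf G := by
  ext g
  rw [mem_pointwise_smul_iff_inv_smul_mem, ← map_inv, MulAut.smul_def,
    mem_inf_stabilizer_subgroupOf_iff, mem_inf_stabilizer_subgroupOf_iff,
    normalizerMonoidHom_apply_apply_coe]
  simp [Equiv.symm_apply_eq, hx]

variable (G a) in
def conjStabilizerHom : (stabilizer (Perm α) a ⊓ normalizer (G : Set (Perm α)) : Subgroup (Perm α)) →*
    stabilizer (MulAut G) ((G ⊓ stabilizer (Perm α) a).subgroupOf G) :=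
  (G.normalizerMonoidHom.comp (inclusion inf_le_right)).codRestrict _ fun x =>
    mem_stabilizer_iff.mpr (normalizerMonoidHom_smul_inf_stabilizer (mem_inf.mp x.2).1)

theorem conjStabilizerHom_surjective (htrans : ∀ b, ∃ g ∈ G, g a = b) :
    Function.Surjective (conjStabilizerHom G a) := by
  rintro ⟨f, hf⟩
  obtain ⟨σ, hσa, hσ⟩ := exists_perm_fixing_conj_eq_mulAut htrans hf
  refine ⟨⟨σ, hσa, mem_normalizer_of_conj_eq_mulAut f hσ⟩, ?_⟩
  ext g : 3
  exact hσ g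

theorem ker_conjStabilizerHom : (conjStabilizerHom G a).ker =
    (stabilizer (Perm α) a ⊓ centralizer (G : Set (Perm α))).subgroupOf
      (stabilizer (Perm α) a ⊓ normalizer (G : Set (Perm α))) := by
  rw [conjStabilizerHom, MonoidHom.ker_codRestrict, ← MonoidHom.comap_ker, normalizerMonoidHom_ker]
  ext x
  simp [mem_subgroupOf, (mem_inf.mp x.2).1]

end PointStabilizer

theorem autH_iso_normalizer_quot_centralizer_general {n : ℕ} [NeZero n]
    (G : Subgroup (Equiv.Perm (Fin n)))
    (htrans : ∀ i : Fin n, ∃ g ∈ G, g 0 = i)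
    (H : Subgroup (Equiv.Perm (Fin n)))
    (hH : H = G ⊓ MulAction.stabilizer (Equiv.Perm (Fin n)) (0 : Fin n))
    (N : Subgroup (Equiv.Perm (Fin n)))
    (hN : N = MulAction.stabilizer (Equiv.Perm (Fin n)) (0 : Fin n) ⊓ Subgroup.normalizer (G : Set (Equiv.Perm (Fin n))))
    (C : Subgroup (Equiv.Perm (Fin n)))
    (hC : C = MulAction.stabilizer (Equiv.Perm (Fin n)) (0 : Fin n) ⊓
      Subgroup.centralizer (G : Set (Equiv.Perm (Fin n)))) :
    -- `Aut_H G ≅ N/C`, expressed by a surjective homomorphism `N → Aut_H G`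
    -- whose kernel is `C` (viewed inside `N`)
    ∃ φ : N →* MulAction.stabilizer (MulAut G) (H.subgroupOf G),
      Function.Surjective φ ∧ φ.ker = C.subgroupOf N := by
  subst hH hN hC
  exact ⟨conjStabilizerHom G 0, conjStabilizerHom_surjective htrans, ker_conjStabilizerHom⟩

theorem autH_iso_normalizer_quot_centralizer {n : ℕ} [NeZero n]
    (G : Subgroup (Equiv.Perm (Fin n)))
    (htrans : ∀ i : Fin n, ∃ g ∈ G, g 0 = i)
    (H : Subgroup (Equiv.Perm (Fin n)))
    (hH : H = G ⊓ MulAction.stabilizer (Equiv.Perm (Fin n)) (0 : Fin n))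
    (hcf : (H.subgroupOf G).normalCore = ⊥)
    (N : Subgroup (Equiv.Perm (Fin n)))
    (hN : N = MulAction.stabilizer (Equiv.Perm (Fin n)) (0 : Fin n) ⊓ Subgroup.normalizer (G : Set (Equiv.Perm (Fin n))))
    (C : Subgroup (Equiv.Perm (Fin n)))
    (hC : C = MulAction.stabilizer (Equiv.Perm (Fin n)) (0 : Fin n) ⊓
      Subgroup.centralizer (G : Set (Equiv.Perm (Fin n)))) :
    -- `Aut_H G ≅ N/C`, expressed by a surjective homomorphism `N → Aut_H G`
    -- whose kernel is `C` (viewed inside `N`)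
    ∃ φ : N →* MulAction.stabilizer (MulAut G) (H.subgroupOf G),
      Function.Surjective φ ∧ φ.ker = C.subgroupOf N :=
  autH_iso_normalizer_quot_centralizer_general G htrans H hH N hN C hC
end

section
/- Let D_n = ⟨a, b : a^n = 1, b^2 = 1, bab^{-1} = a^{-1}⟩ and H = ⟨b⟩. If T is a left transversal of H in D_n (with identity) that is a subgroup of D_n, then either T = ⟨a⟩, or n is even and T = ⟨a^2, ab⟩, which is a dihedral group of order n. -/
open DihedralGroup Subgroup

theorem IsLeftTransversal.isComplement {G : Type*} [Group G] {H : Subgroup G} {S : Set G}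
    (h : IsLeftTransversal H S) : IsComplement S H :=
  isComplement_iff_existsUnique_inv_mul_mem.2 fun g => by
    obtain ⟨s, ⟨hsS, hsH⟩, huniq⟩ := h.2 g
    exact ⟨⟨s, hsS⟩, hsH, fun t ht => Subtype.ext (huniq t ⟨t.2, ht⟩)⟩

namespace Subgroup

variable {G : Type*} [Group G]

theorem mem_zpowers_iff_of_mul_self_eq_one {b g : G} (hb : b * b = 1) :
    g ∈ zpowers b ↔ g = 1 ∨ g = b := by
  refine ⟨?_, by rintro (rfl | rfl) <;> simp [one_mem, mem_zpowers]⟩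
  intro hg
  obtain ⟨k, rfl⟩ := mem_zpowers_iff.1 hg
  obtain ⟨m, rfl | rfl⟩ := Int.even_or_odd' k
  · left; rw [zpow_mul, zpow_two, hb, one_zpow]
  · right; rw [zpow_add, zpow_mul, zpow_two, hb, one_zpow, one_mul, zpow_one]

variable {U : Subgroup G} {b : G}

theorem IsComplement'.mem_or_mul_mem (h : IsComplement' U (zpowers b)) (hb : b * b = 1)
    (g : G) : g ∈ U ∨ g * b ∈ U := by
  obtain ⟨⟨u, t⟩, hut, -⟩ := h.existsUnique g
  rcases (mem_zpowers_iff_of_mul_self_eq_one hb).1 t.2 with ht | ht <;>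
    simp only [ht, mul_one] at hut <;> subst hut
  · exact Or.inl u.2
  · exact Or.inr (by rw [mul_assoc, hb, mul_one]; exact u.2)

theorem IsComplement'.notMem_of_ne_one (h : IsComplement' U (zpowers b)) (hb : b ≠ 1) : b ∉ U :=
  fun hbU => hb ((disjoint_def.1 h.disjoint) hbU (mem_zpowers b))

theorem eq_of_le_of_forall_mem_or_mul_mem {K : Subgroup G} (hKU : K ≤ U) (hb : b ∉ U)
    (hK : ∀ g, g ∈ K ∨ g * b ∈ K) : K = U :=
  le_antisymm hKU fun g hg => (hK g).resolve_right fun hgb =>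
    hb (by simpa using U.mul_mem (U.inv_mem hg) (hKU hgb))

end Subgroup

theorem ZMod.exists_eq_two_mul_or_eq_two_mul_add_one {n : ℕ} (j : ZMod n) :
    ∃ k : ℤ, j = 2 * k ∨ j = 2 * k + 1 := by
  obtain ⟨k, hk⟩ := Int.even_or_odd' (j.cast : ℤ)
  refine ⟨k, ?_⟩
  rw [← ZMod.intCast_zmod_cast j]
  rcases hk with hk | hk <;> rw [hk] <;> push_cast <;> tauto

namespace DihedralGroup

variable {n : ℕ}

theorem r_mem_zpowers_r_one (j : ZMod n) : r j ∈ zpowers (r 1) :=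
  ⟨(j.cast : ℤ), by simp only [r_one_zpow, ZMod.intCast_zmod_cast]⟩

theorem zpowers_r_one_eq {U : Subgroup (DihedralGroup n)} (h1 : r 1 ∈ U) (hb : sr 0 ∉ U) :
    zpowers (r 1) = U :=
  eq_of_le_of_forall_mem_or_mul_mem (zpowers_le.2 h1) hb fun
    | r j => Or.inl (r_mem_zpowers_r_one j)
    | sr j => Or.inr (by rw [sr_mul_sr]; exact r_mem_zpowers_r_one _)


theorem r_two_mul_mem_closure (k : ℤ) :
    r (2 * (k : ZMod n)) ∈ closure {r (2 : ZMod n), r 1 * sr 0} := by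
  rw [← r_zpow]
  exact zpow_mem (subset_closure (Set.mem_insert _ _)) k

theorem sr_neg_one_add_two_mul_mem_closure (k : ℤ) :
    sr (-1 + 2 * (k : ZMod n)) ∈ closure {r (2 : ZMod n), r 1 * sr 0} := by
  have hab : r 1 * sr 0 ∈ closure {r (2 : ZMod n), r 1 * sr 0} :=
    subset_closure (Set.mem_insert_of_mem _ rfl)
  simpa only [r_mul_sr, sr_mul_r, zero_sub] using mul_mem hab (r_two_mul_mem_closure k)

theorem mem_or_mul_sr_zero_mem_closure (g : DihedralGroup n) :
    g ∈ closure {r (2 : ZMod n), r 1 * sr 0} ∨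
      g * sr 0 ∈ closure {r (2 : ZMod n), r 1 * sr 0} := by
  rcases g with j | j <;> obtain ⟨k, rfl | rfl⟩ := ZMod.exists_eq_two_mul_or_eq_two_mul_add_one j
  · exact Or.inl (r_two_mul_mem_closure k)
  · have e : r (2 * (k : ZMod n) + 1) * sr 0 = sr (-1 + 2 * ((-k : ℤ) : ZMod n)) := by
      rw [r_mul_sr]; push_cast; congr 1; ring
    exact Or.inr (e ▸ sr_neg_one_add_two_mul_mem_closure (-k))
  · have e : sr (2 * (k : ZMod n)) * sr 0 = r (2 * ((-k : ℤ) : ZMod n)) := by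
      rw [sr_mul_sr]; push_cast; congr 1; ring
    exact Or.inr (e ▸ r_two_mul_mem_closure (-k))
  · have e : sr (2 * (k : ZMod n) + 1) = sr (-1 + 2 * ((k + 1 : ℤ) : ZMod n)) := by
      push_cast; congr 1; ring
    exact Or.inl (e ▸ sr_neg_one_add_two_mul_mem_closure (k + 1))

theorem closure_r_two_r_one_mul_sr_zero_eq {U : Subgroup (DihedralGroup n)} (h1 : r 1 ∉ U)
    (hb : sr 0 ∉ U) (hcov : ∀ g, g ∈ U ∨ g * sr 0 ∈ U) :
    closure {r (2 : ZMod n), r 1 * sr 0} = U := by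
  have hab : r 1 * sr 0 ∈ U := (hcov (r 1)).resolve_left h1
  have ha2 : r 2 ∈ U := (hcov (r 2)).resolve_right fun h => h1 <| by
    convert U.mul_mem h hab using 1
    simp only [r_mul_sr, sr_mul_sr]; ring_nf
  exact eq_of_le_of_forall_mem_or_mul_mem
    ((closure_le U).2 (Set.insert_subset ha2 (Set.singleton_subset_iff.2 hab))) hb
    mem_or_mul_sr_zero_mem_closure

theorem r_one_mem_zpowers_r_two (hn : Odd n) : r 1 ∈ zpowers (r (2 : ZMod n)) := by
  obtain ⟨k, rfl⟩ := hn
  refine mem_zpowers_iff.2 ⟨k + 1, ?_⟩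
  have hn : ((2 * k + 1 : ℕ) : ZMod (2 * k + 1)) = 0 := ZMod.natCast_self _
  rw [r_zpow]
  congr 1
  push_cast at hn ⊢
  linear_combination hn

theorem even_of_r_two_mem {U : Subgroup (DihedralGroup n)} (h1 : r 1 ∉ U) (h2 : r 2 ∈ U) :
    Even n := by
  by_contra hodd
  exact h1 (zpowers_le.2 h2 (r_one_mem_zpowers_r_two (Nat.not_even_iff_odd.1 hodd)))

theorem card_eq_of_isComplement' {U : Subgroup (DihedralGroup n)}
    (h : IsComplement' U (zpowers (sr 0))) : Nat.card U = n := by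
  have := h.card_mul_card
  rw [Nat.card_zpowers, orderOf_sr, nat_card] at this
  omega

end DihedralGroup

theorem dihedral_subgroup_transversal_general (n : ℕ)
    (T : Set (DihedralGroup n))
    (hT : IsLeftTransversal (Subgroup.zpowers (DihedralGroup.sr (0 : ZMod n))) T)
    (U : Subgroup (DihedralGroup n)) (hTU : T = (U : Set (DihedralGroup n))) :
    T = (Subgroup.zpowers (DihedralGroup.r (1 : ZMod n)) : Set (DihedralGroup n)) ∨
      (Even n ∧
        T = (Subgroup.closure {DihedralGroup.r (2 : ZMod n),
            DihedralGroup.r (1 : ZMod n) * DihedralGroup.sr (0 : ZMod n)} :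
          Set (DihedralGroup n)) ∧
        Nat.card (Subgroup.closure {DihedralGroup.r (2 : ZMod n),
          DihedralGroup.r (1 : ZMod n) * DihedralGroup.sr (0 : ZMod n)}) = n) := by
  subst hTU
  have hc : IsComplement' U (zpowers (sr 0)) := isComplement'_def.2 hT.isComplement
  have hb : sr 0 ∉ U := hc.notMem_of_ne_one (by rw [one_def]; nofun)
  have hcov := hc.mem_or_mul_mem (sr_mul_self 0)
  by_cases h1 : r 1 ∈ U
  · exact Or.inl (congrArg _ (zpowers_r_one_eq h1 hb).symm)
  · have hK := closure_r_two_r_one_mul_sr_zero_eq h1 hb hcov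
    have h2 : r 2 ∈ U := hK ▸ subset_closure (Set.mem_insert _ _)
    exact Or.inr ⟨even_of_r_two_mem h1 h2, by rw [hK], by rw [hK, card_eq_of_isComplement' hc]⟩

/-- If a left transversal (with identity) of `H = ⟨b⟩` in the dihedral group `D_n`
is a subgroup, then it is `⟨a⟩`, or `n` is even and it is `⟨a², ab⟩`, a dihedral
group of order `n`. -/
theorem dihedral_subgroup_transversal (n : ℕ) (hn : 0 < n)
    (T : Set (DihedralGroup n))
    (hT : IsLeftTransversal (Subgroup.zpowers (DihedralGroup.sr (0 : ZMod n))) T)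
    (U : Subgroup (DihedralGroup n)) (hTU : T = (U : Set (DihedralGroup n))) :
    T = (Subgroup.zpowers (DihedralGroup.r (1 : ZMod n)) : Set (DihedralGroup n)) ∨
      (Even n ∧
        T = (Subgroup.closure {DihedralGroup.r (2 : ZMod n),
            DihedralGroup.r (1 : ZMod n) * DihedralGroup.sr (0 : ZMod n)} :
          Set (DihedralGroup n)) ∧
        Nat.card (Subgroup.closure {DihedralGroup.r (2 : ZMod n),
          DihedralGroup.r (1 : ZMod n) * DihedralGroup.sr (0 : ZMod n)}) = n) :=
  dihedral_subgroup_transversal_general n T hT U hTU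
end

section
/- For the dihedral group D_3 = ⟨a,b : a^3 = b^2 = 1, bab^{-1} = a^{-1}⟩ and non-normal subgroup H = ⟨b⟩ of order 2, the number of isomorphism classes of left transversals of H in D_3 (under their induced left loop structures) is 3. -/
/-!
The induced loop of a transversal `T` has the product `x ∘ y = T ∩ xyH`. An isomorphism of
such loops fixes `1` and preserves `∘`, so the number of `x ∈ T` with `x ∘ x = 1` is an
invariant. For `H = ⟨b⟩` in `D₃` (Mathlib's `a = r 1`, `b = sr 0`) there are four transversals
`{1, x, y}`, with `x ∈ aH = {a, ab}` and `y ∈ a²H = {a², a²b}`; the invariant takes the values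
`1, 2, 2, 3` on them, and conjugation by `b` identifies the two transversals with value `2`.
-/

open DihedralGroup Finset

section LeftLoop

variable {G : Type*} [Group G] {H : Subgroup G} {T L : Set G} {σ : G → G}

theorem isLeftTransversal_coe_iff [DecidablePred (· ∈ H)] (S : Finset G) :
    IsLeftTransversal H ↑S ↔ 1 ∈ S ∧ ∀ g, #{s ∈ S | s⁻¹ * g ∈ H} = 1 := by
  simp [IsLeftTransversal, Finset.card_eq_one_iff_existsUnique]

theorem IsLeftTransversal.eq_of_inv_mul_mem (hT : IsLeftTransversal H T) {g s t : G}
    (hs : s ∈ T) (ht : t ∈ T) (hsg : s⁻¹ * g ∈ H) (htg : t⁻¹ * g ∈ H) : s = t :=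
  (hT.2 g).unique ⟨hs, hsg⟩ ⟨ht, htg⟩

theorem IsLeftIso.map_one (hT : (1 : G) ∈ T) (hL : IsLeftTransversal H L)
    (hσ : IsLeftIso H T L σ) : σ 1 = 1 := by
  have h : (σ 1)⁻¹ * (σ 1 * σ 1) ∈ H := hσ.2 1 hT 1 hT 1 hT (by simp)
  rw [inv_mul_cancel_left] at h
  exact hL.eq_of_inv_mul_mem (g := 1) (hσ.1.mapsTo hT) hL.1 (by simpa using H.inv_mem h)
    (by simp)

theorem IsLeftIso.inv_mul_mem_iff (hT : IsLeftTransversal H T) (hL : IsLeftTransversal H L)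
    (hσ : IsLeftIso H T L σ) {x y z : G} (hx : x ∈ T) (hy : y ∈ T) (hz : z ∈ T) :
    (σ z)⁻¹ * (σ x * σ y) ∈ H ↔ z⁻¹ * (x * y) ∈ H := by
  refine ⟨fun h => ?_, hσ.2 x hx y hy z hz⟩
  -- `σ` sends the product `w = x ∘ y` in `T` to `σ x ∘ σ y`, which is unique in `L`.
  obtain ⟨w, ⟨hw, hxyw⟩, -⟩ := hT.2 (x * y)
  have : σ z = σ w := hL.eq_of_inv_mul_mem (hσ.1.mapsTo hz) (hσ.1.mapsTo hw) h
    (hσ.2 x hx y hy w hw hxyw)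
  rwa [hσ.1.injOn hz hw this]

/-- The `x ∈ T` with `x ∘ x = 1` in the induced loop, `1` included. -/
def loopInvolutions (H : Subgroup G) (T : Set G) : Set G := {x ∈ T | x * x ∈ H}

theorem loopInvolutions_coe [DecidablePred (· ∈ H)] (S : Finset G) :
    loopInvolutions H ↑S = ↑{x ∈ S | x * x ∈ H} :=
  (Finset.coe_filter _ _).symm

theorem IsLeftIso.bijOn_loopInvolutions (hT : IsLeftTransversal H T)
    (hL : IsLeftTransversal H L) (hσ : IsLeftIso H T L σ) :
    Set.BijOn σ (loopInvolutions H T) (loopInvolutions H L) := by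
  have hsq : ∀ x ∈ T, σ x * σ x ∈ H ↔ x * x ∈ H := fun x hx => by
    simpa [hσ.map_one hT.1 hL] using hσ.inv_mul_mem_iff hT hL hx hx hT.1
  refine ⟨fun x hx => ⟨hσ.1.mapsTo hx.1, (hsq x hx.1).2 hx.2⟩,
    hσ.1.injOn.mono fun x hx => hx.1, fun y hy => ?_⟩
  obtain ⟨x, hx, rfl⟩ := hσ.1.surjOn hy.1
  exact ⟨x, ⟨hx, (hsq x hx).1 hy.2⟩, rfl⟩

theorem isLeftIso_image_mulEquiv (φ : G ≃* G) (hφ : ∀ h ∈ H, φ h ∈ H) (T : Set G) :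
    IsLeftIso H T (φ '' T) φ :=
  ⟨φ.injective.injOn.bijOn_image, fun x _ y _ z _ h => by simpa using hφ _ h⟩

theorem isLeftIso_image_conj {g : G} (hg : g ∈ H) (T : Set G) :
    IsLeftIso H T (MulAut.conj g '' T) (MulAut.conj g) :=
  isLeftIso_image_mulEquiv _ (fun _ hh => H.mul_mem (H.mul_mem hg hh) (H.inv_mem hg)) T

variable (H) in
def LeftLoopIsomorphic (T L : {S : Set G // IsLeftTransversal H S}) : Prop :=
  ∃ σ : G → G, IsLeftIso H T.1 L.1 σ

variable (H) in
noncomputable def loopInvolutionCount : Quot (LeftLoopIsomorphic H) → ℕ :=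
  Quot.lift (fun T => (loopInvolutions H T.1).ncard) fun T L ⟨_, hσ⟩ =>
    (hσ.bijOn_loopInvolutions T.2 L.2).ncard_eq

end LeftLoop

theorem DihedralGroup.mem_zpowers_sr_iff {n : ℕ} {i : ZMod n} {g : DihedralGroup n} :
    g ∈ Subgroup.zpowers (sr i) ↔ g = 1 ∨ g = sr i := by
  classical
  have : IsOfFinOrder (sr i) := orderOf_pos_iff.mp (by rw [orderOf_sr]; norm_num)
  rw [this.mem_zpowers_iff_mem_range_orderOf, orderOf_sr]
  simpa [Nat.le_one_iff_eq_zero_or_eq_one, or_and_right, exists_or] using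
    or_congr eq_comm eq_comm

namespace DihedralGroup3

abbrev H₃ : Subgroup (DihedralGroup 3) := Subgroup.zpowers (sr 0)

instance : DecidablePred (· ∈ H₃) := fun _ => decidable_of_iff _ mem_zpowers_sr_iff.symm

def transversal (x y : DihedralGroup 3) : Finset (DihedralGroup 3) := {1, x, y}

theorem isLeftTransversal_iff (S : Finset (DihedralGroup 3)) :
    IsLeftTransversal H₃ ↑S ↔ S = transversal (r 1) (r 2) ∨ S = transversal (r 1) (sr 1) ∨
      S = transversal (sr 2) (r 2) ∨ S = transversal (sr 2) (sr 1) := by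
  rw [isLeftTransversal_coe_iff]
  revert S
  decide

theorem conj_image_transversal :
    MulAut.conj (sr 0) '' (transversal (r 1) (sr 1) : Set (DihedralGroup 3)) =
      ↑(transversal (sr 2) (r 2)) := by
  rw [← Finset.coe_image, Finset.coe_inj]
  decide

def classRepSet : Fin 3 → Finset (DihedralGroup 3) :=
  ![transversal (r 1) (r 2), transversal (r 1) (sr 1), transversal (sr 2) (sr 1)]

theorem isLeftTransversal_classRepSet (k : Fin 3) : IsLeftTransversal H₃ ↑(classRepSet k) := by
  rw [isLeftTransversal_coe_iff]
  revert k
  decide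

def classRep (k : Fin 3) : {S : Set (DihedralGroup 3) // IsLeftTransversal H₃ S} :=
  ⟨_, isLeftTransversal_classRepSet k⟩

theorem loopInvolutionCount_classRep (k : Fin 3) :
    loopInvolutionCount H₃ (Quot.mk _ (classRep k)) = k + 1 := by
  change (loopInvolutions H₃ ↑(classRepSet k)).ncard = k + 1
  rw [loopInvolutions_coe, Set.ncard_coe_finset]
  revert k
  decide

theorem bijective_mk_classRep :
    Function.Bijective (Quot.mk (LeftLoopIsomorphic H₃) ∘ classRep) := by
  refine ⟨fun a b h => ?_, Quot.ind fun ⟨S, hS⟩ => ?_⟩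
  · have := congrArg (loopInvolutionCount H₃) h
    simp only [Function.comp_apply, loopInvolutionCount_classRep] at this
    omega
  lift S to Finset (DihedralGroup 3) using S.toFinite
  rcases (isLeftTransversal_iff S).1 hS with rfl | rfl | rfl | rfl
  · exact ⟨0, rfl⟩
  · exact ⟨1, rfl⟩
  · refine ⟨1, Quot.sound ⟨MulAut.conj (sr 0), ?_⟩⟩
    have h := isLeftIso_image_conj (Subgroup.mem_zpowers (sr 0))
      (transversal (r 1) (sr 1) : Set (DihedralGroup 3))
    rwa [conj_image_transversal] at h
  · exact ⟨2, rfl⟩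

end DihedralGroup3

/-- `ict(D₃, ⟨b⟩) = 3`: the number of isomorphism classes of left transversals of
the (non-normal) order-2 subgroup `⟨b⟩` in the dihedral group `D₃` is 3. -/
theorem ict_D3 :
    Nat.card (Quot fun (T L : {S : Set (DihedralGroup 3) //
        IsLeftTransversal (Subgroup.zpowers (DihedralGroup.sr (0 : ZMod 3))) S}) =>
      ∃ σ : DihedralGroup 3 → DihedralGroup 3,
        IsLeftIso (Subgroup.zpowers (DihedralGroup.sr (0 : ZMod 3))) T.1 L.1 σ)
      = 3 :=
  (Nat.card_eq_of_bijective _ DihedralGroup3.bijective_mk_classRep).symm.trans (Nat.card_fin 3)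
end
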